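/- arXiv:1012.2192 — 3 statements merged into one kernel-verified Lean document; each statement's English description precedes it below -/
import Mathlib

section
/- Let P be a closed set of positions, n = u_{n,P}(q) the corresponding pattern algebra with pattern group G = 1 + n, and let λ ∈ n* be quasi-monomial. Then: (a) the right orbit λG equals λ + span_{F_q}{ e*_{ij} : (i,j) ∈ ⊥L_λ }, where e*_{ij}(X) = X_{ij}; and (b) for every μ ∈ λG, l¹_μ = { X ∈ u_{n,P}(q) : X_{ij} = 0 for all (i,j) ∈ ⊥L_λ } and s¹_μ = { X ∈ u_{n,P}(q) : X_{ij} = 0 for all (i,j) ∈ ⊥S_λ }. -/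
open scoped BigOperators Classical ComplexOrder
open Complex

set_option linter.unusedSectionVars false

noncomputable section

namespace Paper

variable {F : Type*} [Field F]

/-! ### Characters of finite groups -/

/-- `f : G → ℂ` is the character of some finite-dimensional complex representation. -/
def IsCharacter {G : Type} [Monoid G] (f : G → ℂ) : Prop :=
  ∃ V : FDRep ℂ G, V.character = f

/-- `f : G → ℂ` is the character of some irreducible finite-dimensional complex
representation. -/
def IsIrreducibleCharacter {G : Type} [Monoid G] (f : G → ℂ) : Prop :=
  ∃ V : FDRep ℂ G, CategoryTheory.Simple V ∧ V.character = f

/-- The standard inner product `⟨f, h⟩ = |G|⁻¹ ∑ₓ f x conj (h x)` on complex-valued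
functions on a finite group. -/
def cinner (G : Type*) (f h : G → ℂ) : ℂ :=
  (Nat.card G : ℂ)⁻¹ * ∑ᶠ x : G, f x * (starRingEnd ℂ) (h x)

/-- Induction of a complex-valued function from (the subset underlying) a subgroup `H` of a
finite group `G`, via the Frobenius formula
`Ind_H^G(f)(g) = |H|⁻¹ ∑_{x ∈ G, xgx⁻¹ ∈ H} f (xgx⁻¹)`. -/
def indFun {G : Type*} [Group G] (H : Set G) (f : G → ℂ) : G → ℂ := fun g =>
  (Nat.card H : ℂ)⁻¹ * ∑ᶠ x : G, if x * g * x⁻¹ ∈ H then f (x * g * x⁻¹) else 0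

/-- The set of elements of the `m`-th cyclotomic field `ℚ(ζ_m) ⊆ ℂ`, where
`ζ_m = exp (2πi/m)`. -/
def cycField (m : ℕ) : Set ℂ :=
  (Algebra.adjoin ℚ {Complex.exp (2 * Real.pi * Complex.I / m)} : Subalgebra ℚ ℂ)

/-! ### Algebra groups of matrix algebras -/

variable {n : ℕ}

/-- The subgroup `1 + S` of invertible matrices, for `S` a non-unital subalgebra of the
matrix algebra (for example the algebra of strictly upper triangular matrices). -/
def grp [Fintype F] (S : NonUnitalSubalgebra F (Matrix (Fin n) (Fin n) F)) :
    Subgroup (Matrix (Fin n) (Fin n) F)ˣ where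
  carrier := {g | (g : Matrix (Fin n) (Fin n) F) - 1 ∈ S}
  one_mem' := by
    show ((1 : (Matrix (Fin n) (Fin n) F)ˣ) : Matrix (Fin n) (Fin n) F) - 1 ∈ S
    rw [Units.val_one, sub_self]; exact zero_mem S
  mul_mem' := by
    intro a b ha hb
    show ((a * b : (Matrix (Fin n) (Fin n) F)ˣ) : Matrix (Fin n) (Fin n) F) - 1 ∈ S
    have h : ((a * b : (Matrix (Fin n) (Fin n) F)ˣ) : Matrix (Fin n) (Fin n) F) - 1 =
        ((a : Matrix (Fin n) (Fin n) F) - 1) + ((b : Matrix (Fin n) (Fin n) F) - 1) +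
          ((a : Matrix (Fin n) (Fin n) F) - 1) * ((b : Matrix (Fin n) (Fin n) F) - 1) := by
      rw [Units.val_mul]; noncomm_ring
    rw [h]
    exact add_mem (add_mem ha hb) (mul_mem ha hb)
  inv_mem' := by
    intro a ha
    show ((a⁻¹ : (Matrix (Fin n) (Fin n) F)ˣ) : Matrix (Fin n) (Fin n) F) - 1 ∈ S
    have hpow : ∀ m : ℕ, ((a ^ m : (Matrix (Fin n) (Fin n) F)ˣ) : Matrix (Fin n) (Fin n) F)
        - 1 ∈ S := by
      intro m
      induction m with
      | zero => rw [pow_zero, Units.val_one, sub_self]; exact zero_mem S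
      | succ m ih =>
          rw [pow_succ, Units.val_mul]
          have h : ((a ^ m : (Matrix (Fin n) (Fin n) F)ˣ) : Matrix (Fin n) (Fin n) F) *
              (a : Matrix (Fin n) (Fin n) F) - 1 =
              (((a ^ m : (Matrix (Fin n) (Fin n) F)ˣ) : Matrix (Fin n) (Fin n) F) - 1) +
              ((a : Matrix (Fin n) (Fin n) F) - 1) +
              (((a ^ m : (Matrix (Fin n) (Fin n) F)ˣ) : Matrix (Fin n) (Fin n) F) - 1) *
              ((a : Matrix (Fin n) (Fin n) F) - 1) := by noncomm_ring
          rw [h]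
          exact add_mem (add_mem ih ha) (mul_mem ih ha)
    have hk : 0 < orderOf a := orderOf_pos a
    have hinv : a⁻¹ = a ^ (orderOf a - 1) := by
      have h1 : a ^ (orderOf a - 1) * a = 1 := by
        rw [← pow_succ, Nat.sub_add_cancel hk, pow_orderOf_eq_one]
      exact (eq_inv_of_mul_eq_one_left h1).symm
    rw [hinv]
    exact hpow _

variable [Fintype F] {S : NonUnitalSubalgebra F (Matrix (Fin n) (Fin n) F)}

lemma mem_grp_iff {g : (Matrix (Fin n) (Fin n) F)ˣ} :
    g ∈ grp S ↔ (g : Matrix (Fin n) (Fin n) F) - 1 ∈ S := Iff.rfl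

/-- The underlying matrix of an element of an algebra group. -/
def mat (g : ↥(grp S)) : Matrix (Fin n) (Fin n) F :=
  ((g : (Matrix (Fin n) (Fin n) F)ˣ) : Matrix (Fin n) (Fin n) F)

lemma mat_mem (g : ↥(grp S)) : mat g - 1 ∈ S := g.2

/-- `g - 1` as an element of the algebra `S`. -/
def gsub (g : ↥(grp S)) : ↥S := ⟨mat g - 1, mat_mem g⟩

/-- The dual space of `F`-linear functionals on the algebra `S`. -/
abbrev Dual (S : NonUnitalSubalgebra F (Matrix (Fin n) (Fin n) F)) := ↥S →ₗ[F] F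

/-- The function `θ_λ(g) = θ(λ(g-1))` on the algebra group `1 + S`. -/
def thetaFun (θ : AddChar F ℂ) (lam : Dual S) : ↥(grp S) → ℂ := fun g => θ (lam (gsub g))

lemma conj_mem (a b : ↥(grp S)) {X : Matrix (Fin n) (Fin n) F} (hX : X ∈ S) :
    mat a * X * mat b ∈ S := by
  have h : mat a * X * mat b =
      X + (mat a - 1) * X + X * (mat b - 1) + (mat a - 1) * X * (mat b - 1) := by noncomm_ring
  rw [h]
  exact add_mem (add_mem (add_mem hX (mul_mem (mat_mem a) hX)) (mul_mem hX (mat_mem b)))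
    (mul_mem (mul_mem (mat_mem a) hX) (mat_mem b))

/-- The functional `X ↦ λ(a · X · b)`, used to define the various actions of an algebra group
on the dual space of its algebra. -/
def conjDual (a b : ↥(grp S)) (lam : Dual S) : Dual S where
  toFun X := lam ⟨mat a * (X : Matrix (Fin n) (Fin n) F) * mat b, conj_mem a b X.2⟩
  map_add' X Y := by
    rw [← map_add]
    exact congrArg lam (Subtype.ext (by simp [mul_add, add_mul]))
  map_smul' c X := by
    rw [RingHom.id_apply, ← map_smul]
    exact congrArg lam (Subtype.ext (by simp [Matrix.mul_smul, Matrix.smul_mul]))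

/-- The left orbit `Gλ` of `λ` under `(gλ)(X) = λ(g⁻¹X)`. -/
def leftOrbit (lam : Dual S) : Set (Dual S) := {ν | ∃ g : ↥(grp S), ν = conjDual g⁻¹ 1 lam}

/-- The two-sided orbit `GλG` of `λ` under `(gλh)(X) = λ(g⁻¹Xh⁻¹)`. -/
def biOrbit (lam : Dual S) : Set (Dual S) := {ν | ∃ g h : ↥(grp S), ν = conjDual g⁻¹ h⁻¹ lam}

/-- The coadjoint orbit of `λ` under `λ^g(X) = λ(gXg⁻¹)`. -/
def coadjOrbit (lam : Dual S) : Set (Dual S) := {ν | ∃ g : ↥(grp S), ν = conjDual g g⁻¹ lam}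

/-- The supercharacter `χ_λ = (|Gλ|/|GλG|) ∑_{ν ∈ GλG} θ_ν`. -/
def superChar (θ : AddChar F ℂ) (lam : Dual S) : ↥(grp S) → ℂ := fun g =>
  ((Nat.card (leftOrbit lam) : ℂ) / (Nat.card (biOrbit lam) : ℂ)) *
    ∑ᶠ ν ∈ biOrbit lam, thetaFun θ ν g

/-- The Kirillov function `ψ_λ = |λ^G|^{-1/2} ∑_{ν ∈ λ^G} θ_ν`. -/
def kirillov (θ : AddChar F ℂ) (lam : Dual S) : ↥(grp S) → ℂ := fun g =>
  ((Real.sqrt (Nat.card (coadjOrbit lam)) : ℂ))⁻¹ * ∑ᶠ ν ∈ coadjOrbit lam, thetaFun θ ν g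


/-! ### The strictly upper triangular algebra -/

/-- The `F`-algebra of strictly upper triangular `n × n` matrices. -/
def uAlg (n : ℕ) (F : Type*) [Field F] :
    NonUnitalSubalgebra F (Matrix (Fin n) (Fin n) F) :=
  Submodule.toNonUnitalSubalgebra
    { carrier := {M | ∀ i j : Fin n, j ≤ i → M i j = 0}
      add_mem' := fun ha hb i j hij => by
        rw [Matrix.add_apply, ha i j hij, hb i j hij, add_zero]
      zero_mem' := fun i j _ => rfl
      smul_mem' := fun c a ha i j hij => by
        rw [Matrix.smul_apply, ha i j hij, smul_zero] }
    (by
      intro X Y hX hY i j hij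
      rw [Matrix.mul_apply]
      refine Finset.sum_eq_zero fun k _ => ?_
      by_cases hk : k ≤ i
      · rw [hX i k hk, zero_mul]
      · rw [hY k j (hij.trans (not_le.mp hk).le), mul_zero])

lemma mem_uAlg {M : Matrix (Fin n) (Fin n) F} :
    M ∈ uAlg n F ↔ ∀ i j : Fin n, j ≤ i → M i j = 0 := Iff.rfl

/-! ### The chain of subspaces `l^i ⊆ ⋯ ⊆ s^i` attached to a linear functional -/

section Chain

variable {A : Type*} [NonUnitalRing A] [Module F A] [SMulCommClass F A A] [IsScalarTower F A A]

/-- For subspaces `s, t` of an algebra, the subspace `{x ∈ s | λ(x·t) = 0}`. -/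
def lker (lam : A →ₗ[F] F) (s t : Submodule F A) : Submodule F A where
  carrier := {x | x ∈ s ∧ ∀ y ∈ t, lam (x * y) = 0}
  add_mem' := fun ha hb => ⟨s.add_mem ha.1 hb.1, fun y hy => by
    rw [add_mul, map_add, ha.2 y hy, hb.2 y hy, add_zero]⟩
  zero_mem' := ⟨s.zero_mem, fun y _ => by rw [zero_mul, map_zero]⟩
  smul_mem' := fun c a ha => ⟨s.smul_mem c ha.1, fun y hy => by
    rw [smul_mul_assoc, map_smul, ha.2 y hy, smul_zero]⟩

/-- The pair of subspaces `(l^i, s^i)` defined inductively by `l⁰ = 0`, `s⁰ = n`,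
`l^{i+1} = {X ∈ s^i : λ(X·s^i) = 0}`, `s^{i+1} = {X ∈ s^i : λ(X·l^{i+1}) = 0}`. -/
def chain (lam : A →ₗ[F] F) : ℕ → Submodule F A × Submodule F A
  | 0 => (⊥, ⊤)
  | i + 1 =>
    (lker lam (chain lam i).2 (chain lam i).2,
     lker lam (chain lam i).2 (lker lam (chain lam i).2 (chain lam i).2))

/-- The subspace `l^i_λ`. -/
def lC (lam : A →ₗ[F] F) (i : ℕ) : Submodule F A := (chain lam i).1

/-- The subspace `s^i_λ`. -/
def sC (lam : A →ₗ[F] F) (i : ℕ) : Submodule F A := (chain lam i).2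

/-- The terminal subspace `l̄_λ` of the ascending chain `l¹ ⊆ l² ⊆ ⋯`. -/
def lbar (lam : A →ₗ[F] F) : Submodule F A := ⨆ i, lC lam i

/-- The terminal subspace `s̄_λ` of the descending chain `s¹ ⊇ s² ⊇ ⋯`. -/
def sbar (lam : A →ₗ[F] F) : Submodule F A := ⨅ i, sC lam i

end Chain

/-- The underlying set of the algebra subgroup `L̄_λ = 1 + l̄_λ`. -/
def Lset (lam : Dual S) : Set ↥(grp S) := {g | gsub g ∈ lbar lam}

/-- The underlying set of the algebra subgroup `S̄_λ = 1 + s̄_λ`. -/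
def Sset (lam : Dual S) : Set ↥(grp S) := {g | gsub g ∈ sbar lam}

/-- The character `ξ_λ = Ind_{L̄_λ}^G (θ_λ)`. -/
def xiChar (θ : AddChar F ℂ) (lam : Dual S) : ↥(grp S) → ℂ :=
  indFun (Lset lam) (thetaFun θ lam)

/-! ### Quasi-monomial functionals and shapes -/

/-- The value `λ_{ij} = λ(e_{ij})` (interpreted as `0` when `e_{ij} ∉ S`). -/
def lamEntry (lam : Dual S) (i j : Fin n) : F :=
  if h : Matrix.single i j (1 : F) ∈ S then lam ⟨_, h⟩ else 0

/-- A functional is quasi-monomial if the matrix `(λ_{ij})` has at most one nonzero entry in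
each row and in each column. -/
def QuasiMonomial (lam : Dual S) : Prop :=
  (∀ i j k : Fin n, lamEntry lam i j ≠ 0 → lamEntry lam i k ≠ 0 → j = k) ∧
  (∀ i j k : Fin n, lamEntry lam i k ≠ 0 → lamEntry lam j k ≠ 0 → i = j)

/-- The parts of the shape of `λ`: the equivalence classes of the finest equivalence
relation for which `i ∼ j` whenever `λ_{ij} ≠ 0`. -/
def shapeClasses (lam : Dual S) : Set (Set (Fin n)) :=
  {s | ∃ i : Fin n,
    s = {j | Relation.EqvGen (fun a b => lamEntry lam a b ≠ 0 ∨ lamEntry lam b a ≠ 0) i j}}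

/-! ### Explicit functionals -/

/-- The linear functional on `S` determined by a matrix `c` of coefficients:
`X ↦ ∑_{i,j} c_{ij} X_{ij}`; it sends the elementary matrix `e_{ij}` to `c_{ij}`. -/
def lamOf (S : NonUnitalSubalgebra F (Matrix (Fin n) (Fin n) F))
    (c : Matrix (Fin n) (Fin n) F) : Dual S where
  toFun X := ∑ i : Fin n, ∑ j : Fin n, c i j * (X : Matrix (Fin n) (Fin n) F) i j
  map_add' X Y := by
    simp [Matrix.add_apply, mul_add, Finset.sum_add_distrib]
  map_smul' a X := by
    simp only [RingHom.id_apply, smul_eq_mul, Finset.mul_sum]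
    refine Finset.sum_congr rfl fun i _ => Finset.sum_congr rfl fun j _ => ?_
    have : ((a • X : ↥S) : Matrix (Fin n) (Fin n) F) i j
        = a * (X : Matrix (Fin n) (Fin n) F) i j := by
      simp [Matrix.smul_apply]
    rw [this]; ring

/-- The coordinate functional `e*_{ij} : X ↦ X_{ij}` on `S`. -/
def coordFn (S : NonUnitalSubalgebra F (Matrix (Fin n) (Fin n) F))
    (a : Fin n × Fin n) : Dual S where
  toFun X := (X : Matrix (Fin n) (Fin n) F) a.1 a.2
  map_add' X Y := by simp
  map_smul' c X := by simp

/-- Matrix entry in (1-based) coordinates, `0` when out of range. -/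
def ent (X : Matrix (Fin n) (Fin n) F) (a : ℕ × ℕ) : F :=
  if h : 1 ≤ a.1 ∧ a.1 ≤ n ∧ 1 ≤ a.2 ∧ a.2 ≤ n then
    X ⟨a.1 - 1, by omega⟩ ⟨a.2 - 1, by omega⟩ else 0


/-! ### The specific functional `λ` on `u_{n}(q)` from Section 3.3 of the paper -/

/-- The coefficient matrix of the functional `λ` (positions written 1-based). -/
def lamCoef (r n : ℕ) (F : Type*) [Field F] : Matrix (Fin n) (Fin n) F := fun a b =>
  let j := (a : ℕ) + 1
  let k := (b : ℕ) + 1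
  if 1 ≤ j ∧ j ≤ r ∧ k = j + r then -1
  else if 1 ≤ j ∧ j ≤ r ∧ k = j + 2 * r then 1
  else if r + 1 ≤ j ∧ j ≤ 2 * r ∧ k = j + 2 * r + 1 then -1
  else if r + 1 ≤ j ∧ j ≤ 2 * r ∧ k = j + 3 * r + 1 then 1
  else if 2 * r + 1 ≤ j ∧ j ≤ 3 * r + 1 ∧ k = j + r then 1
  else if 3 * r + 2 ≤ j ∧ j ≤ 4 * r + 1 ∧ k = j + 2 * r then 1
  else 0

/-- The linear functional `λ ∈ u_n(q)*` of the paper, determined by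
`λ(e_{jk}) = -1` if `j = k - r ∈ [1,r]`, `λ(e_{jk}) = 1` if `j = k - 2r ∈ [1,r]`,
`λ(e_{jk}) = -1` if `j = k - 2r - 1 ∈ [r+1,2r]`, `λ(e_{jk}) = 1` if `j = k - 3r - 1 ∈ [r+1,2r]`,
`λ(e_{jk}) = 1` if `j = k - r ∈ [2r+1,3r+1]`, `λ(e_{jk}) = 1` if `j = k - 2r ∈ [3r+2,4r+1]`,
and `λ(e_{jk}) = 0` otherwise. -/
def lamStd (r n : ℕ) (F : Type*) [Field F] [Fintype F] : Dual (uAlg n F) :=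
  lamOf (uAlg n F) (lamCoef r n F)

/-! ### Pattern algebras -/

/-- A set of positions is closed when `(i,j) ∈ P` and `(j,k) ∈ P` imply `(i,k) ∈ P`. -/
def IsClosedPositions {n : ℕ} (P : Set (Fin n × Fin n)) : Prop :=
  ∀ i j k : Fin n, (i, j) ∈ P → (j, k) ∈ P → (i, k) ∈ P

/-- The subspace of matrices supported on a set `P` of positions. -/
def patSub (n : ℕ) (F : Type*) [Field F] (P : Set (Fin n × Fin n)) :
    Submodule F (Matrix (Fin n) (Fin n) F) where
  carrier := {M | ∀ i j : Fin n, (i, j) ∉ P → M i j = 0}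
  add_mem' := fun ha hb i j hij => by
    rw [Matrix.add_apply, ha i j hij, hb i j hij, add_zero]
  zero_mem' := fun i j _ => rfl
  smul_mem' := fun c a ha i j hij => by rw [Matrix.smul_apply, ha i j hij, smul_zero]

/-- The pattern algebra `u_{n,P}(q)` of matrices supported on a closed set `P` of
positions. -/
def patAlg (n : ℕ) (F : Type*) [Field F] (P : Set (Fin n × Fin n))
    (hC : IsClosedPositions P) : NonUnitalSubalgebra F (Matrix (Fin n) (Fin n) F) :=
  (patSub n F P).toNonUnitalSubalgebra (by
    intro X Y hX hY
    intro i j hij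
    rw [Matrix.mul_apply]
    refine Finset.sum_eq_zero fun k _ => ?_
    by_cases hik : (i, k) ∈ P
    · by_cases hkj : (k, j) ∈ P
      · exact absurd (hC i k j hik hkj) hij
      · rw [hY k j hkj, mul_zero]
    · rw [hX i k hik, zero_mul])


/-! ### The algebra `a_n(q)` of superdiagonal-constant strictly upper triangular matrices -/

/-- Membership condition for `a_n(q)` : strictly upper triangular, and constant along each
superdiagonal. -/
def aCond {n : ℕ} (M : Matrix (Fin n) (Fin n) F) : Prop :=
  (∀ i j : Fin n, j ≤ i → M i j = 0) ∧
  ∀ i j i' j' : Fin n, (i : ℕ) < j → (i' : ℕ) < j' →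
    (i : ℕ) + (j' : ℕ) = (i' : ℕ) + (j : ℕ) → M i j = M i' j'

lemma aCond_mul {n : ℕ} {X Y : Matrix (Fin n) (Fin n) F}
    (hX : aCond X) (hY : aCond Y) : aCond (X * Y) := by
  obtain ⟨hXu, hXc⟩ := hX
  obtain ⟨hYu, hYc⟩ := hY
  have hupper : ∀ i j : Fin n, j ≤ i → (X * Y) i j = 0 := by
    intro i j hij
    rw [Matrix.mul_apply]
    refine Finset.sum_eq_zero fun k _ => ?_
    by_cases hk : k ≤ i
    · rw [hXu i k hk, zero_mul]
    · rw [hYu k j (hij.trans (not_le.mp hk).le), mul_zero]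
  refine ⟨hupper, ?_⟩
  intro i j i' j' hij hij' hsum
  rw [Matrix.mul_apply, Matrix.mul_apply]
  have h1 : ∀ k : Fin n, ¬((i : ℕ) < (k : ℕ) ∧ (k : ℕ) < (j : ℕ)) → X i k * Y k j = 0 := by
    intro k hk
    by_cases h : (i : ℕ) < (k : ℕ)
    · have hjk : j ≤ k := by rw [Fin.le_def]; omega
      rw [hYu k j hjk, mul_zero]
    · have hki : k ≤ i := by rw [Fin.le_def]; omega
      rw [hXu i k hki, zero_mul]
  have h2 : ∀ k : Fin n, ¬((i' : ℕ) < (k : ℕ) ∧ (k : ℕ) < (j' : ℕ)) → X i' k * Y k j' = 0 := by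
    intro k hk
    by_cases h : (i' : ℕ) < (k : ℕ)
    · have hjk : j' ≤ k := by rw [Fin.le_def]; omega
      rw [hYu k j' hjk, mul_zero]
    · have hki : k ≤ i' := by rw [Fin.le_def]; omega
      rw [hXu i' k hki, zero_mul]
  have e1 : ∑ k : Fin n, X i k * Y k j
      = ∑ k ∈ Finset.univ.filter (fun k : Fin n => (i : ℕ) < (k : ℕ) ∧ (k : ℕ) < (j : ℕ)),
        X i k * Y k j := by
    refine (Finset.sum_filter_of_ne fun k _ hk => ?_).symm
    by_contra hp
    exact hk (h1 k hp)
  have e2 : ∑ k : Fin n, X i' k * Y k j'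
      = ∑ k ∈ Finset.univ.filter (fun k : Fin n => (i' : ℕ) < (k : ℕ) ∧ (k : ℕ) < (j' : ℕ)),
        X i' k * Y k j' := by
    refine (Finset.sum_filter_of_ne fun k _ hk => ?_).symm
    by_contra hp
    exact hk (h2 k hp)
  rw [e1, e2]
  refine Finset.sum_bij'
    (fun (k : Fin n) (hk : k ∈ Finset.univ.filter
        (fun k : Fin n => (i : ℕ) < (k : ℕ) ∧ (k : ℕ) < (j : ℕ))) =>
      (⟨(i' : ℕ) + ((k : ℕ) - (i : ℕ)), by
        have h1 := (Finset.mem_filter.mp hk).2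
        have h2 := j'.isLt
        omega⟩ : Fin n))
    (fun (m : Fin n) (hm : m ∈ Finset.univ.filter
        (fun m : Fin n => (i' : ℕ) < (m : ℕ) ∧ (m : ℕ) < (j' : ℕ))) =>
      (⟨(i : ℕ) + ((m : ℕ) - (i' : ℕ)), by
        have h1 := (Finset.mem_filter.mp hm).2
        have h2 := j.isLt
        omega⟩ : Fin n))
    ?_ ?_ ?_ ?_ ?_
  · intro k hk
    have h1 := (Finset.mem_filter.mp hk).2
    simp only [Finset.mem_filter, Finset.mem_univ, true_and]
    constructor
    · omega
    · omega
  · intro m hm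
    have h1 := (Finset.mem_filter.mp hm).2
    simp only [Finset.mem_filter, Finset.mem_univ, true_and]
    constructor
    · omega
    · omega
  · intro k hk
    have h1 := (Finset.mem_filter.mp hk).2
    exact Fin.ext (by simp only [Fin.val_mk]; omega)
  · intro m hm
    have h1 := (Finset.mem_filter.mp hm).2
    exact Fin.ext (by simp only [Fin.val_mk]; omega)
  · intro k hk
    have h1 := (Finset.mem_filter.mp hk).2
    have hx : X i k = X i' ⟨(i' : ℕ) + ((k : ℕ) - (i : ℕ)), by
        have h2 := j'.isLt; omega⟩ := by
      refine hXc i k i' _ h1.1 ?_ ?_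
      · simp only [Fin.val_mk]; omega
      · simp only [Fin.val_mk]; omega
    have hy : Y k j = Y ⟨(i' : ℕ) + ((k : ℕ) - (i : ℕ)), by
        have h2 := j'.isLt; omega⟩ j' := by
      refine hYc k j _ j' h1.2 ?_ ?_
      · simp only [Fin.val_mk]; omega
      · simp only [Fin.val_mk]; omega
    rw [hx, hy]

/-- The algebra `a_n(q)` of strictly upper triangular matrices that are constant along each
superdiagonal. -/
def aAlg (n : ℕ) (F : Type*) [Field F] [Fintype F] :
    NonUnitalSubalgebra F (Matrix (Fin n) (Fin n) F) :=
  Submodule.toNonUnitalSubalgebra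
    { carrier := {M | aCond M}
      add_mem' := by
        rintro a b ⟨hau, hac⟩ ⟨hbu, hbc⟩
        refine ⟨fun i j hij => by rw [Matrix.add_apply, hau i j hij, hbu i j hij, add_zero],
          fun i j i' j' h1 h2 h3 => ?_⟩
        rw [Matrix.add_apply, Matrix.add_apply, hac i j i' j' h1 h2 h3,
          hbc i j i' j' h1 h2 h3]
      zero_mem' := ⟨fun i j _ => rfl, fun _ _ _ _ _ _ _ => rfl⟩
      smul_mem' := by
        rintro c a ⟨hau, hac⟩
        refine ⟨fun i j hij => by rw [Matrix.smul_apply, hau i j hij, smul_zero],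
          fun i j i' j' h1 h2 h3 => ?_⟩
        rw [Matrix.smul_apply, Matrix.smul_apply, hac i j i' j' h1 h2 h3] }
    (fun X Y hX hY => aCond_mul hX hY)

lemma mem_aAlg {M : Matrix (Fin n) (Fin n) F} : M ∈ aAlg n F ↔ aCond M := Iff.rfl


/-- Iterated product `a * b₁ * ⋯ * b_k` of elements of a (non-unital) algebra. -/
def mulChain {A : Type*} [Mul A] : A → List A → A
  | a, [] => a
  | a, b :: l => mulChain (a * b) l

/-! ### Algebra groups of abstract nilpotent algebras, via the unitization -/

section AlgebraGroup

variable (F : Type) [Field F] (A : Type) [NonUnitalRing A] [Module F A]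
  [SMulCommClass F A A] [IsScalarTower F A A]

/-- The algebra `A` is nilpotent: some power `A^k` vanishes, i.e. all products of `k`
elements of `A` are zero. -/
def IsNilpotentAlgebra : Prop :=
  ∃ k : ℕ, ∀ (a : A) (l : List A), l.length + 1 = k → mulChain a l = 0

/-- The algebra group `G = 1 + A`, realized as the group of units of the unitization
`F ⊕ A` whose scalar component equals `1` (for `A` nilpotent these are exactly the
elements `1 + X`, `X ∈ A`). -/
def algGrp : Subgroup (Unitization F A)ˣ where
  carrier := {u | ((u : Unitization F A)).fst = 1}
  one_mem' := by simp
  mul_mem' := by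
    intro a b ha hb
    show ((a * b : (Unitization F A)ˣ) : Unitization F A).fst = 1
    rw [Units.val_mul, Unitization.fst_mul]
    rw [Set.mem_setOf_eq] at ha hb
    rw [ha, hb, one_mul]
  inv_mem' := by
    intro a ha
    rw [Set.mem_setOf_eq] at ha
    show ((a⁻¹ : (Unitization F A)ˣ) : Unitization F A).fst = 1
    have h : ((a : Unitization F A) * ((a⁻¹ : (Unitization F A)ˣ) : Unitization F A)).fst
        = (1 : Unitization F A).fst := by
      rw [Units.mul_inv]
    rw [Unitization.fst_mul, ha, one_mul, Unitization.fst_one] at h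
    exact h

variable {F A}

/-- The element `g - 1 ∈ A` for `g` in the algebra group `1 + A`. -/
def sndU (g : ↥(algGrp F A)) : A := ((g : (Unitization F A)ˣ) : Unitization F A).snd

/-- The function `θ_λ(g) = θ(λ(g - 1))` on the algebra group `1 + A`. -/
def thetaFunU (θ : AddChar F ℂ) (lam : A →ₗ[F] F) : ↥(algGrp F A) → ℂ := fun g =>
  θ (lam (sndU g))

/-- The coadjoint action: `λ^g(X) = λ(g X g⁻¹)`. -/
def coadjU (g : ↥(algGrp F A)) (lam : A →ₗ[F] F) : A →ₗ[F] F where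
  toFun X := lam ((((g : (Unitization F A)ˣ) : Unitization F A) * (X : Unitization F A) *
    ((((g : (Unitization F A)ˣ))⁻¹ : (Unitization F A)ˣ) : Unitization F A)).snd)
  map_add' X Y := by
    rw [← map_add, ← Unitization.snd_add]
    refine congrArg lam (congrArg (fun x : Unitization F A => x.snd) ?_)
    rw [Unitization.inr_add]
    noncomm_ring
  map_smul' c X := by
    rw [RingHom.id_apply, ← map_smul, ← Unitization.snd_smul]
    refine congrArg lam (congrArg (fun x : Unitization F A => x.snd) ?_)
    rw [Unitization.inr_smul, mul_smul_comm, smul_mul_assoc]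

/-- The coadjoint orbit of `λ`. -/
def coadjOrbitU (lam : A →ₗ[F] F) : Set (A →ₗ[F] F) :=
  {nu | ∃ g : ↥(algGrp F A), nu = coadjU g lam}

/-- The Kirillov function `ψ_λ` of the algebra group `1 + A`. -/
def kirillovU (θ : AddChar F ℂ) (lam : A →ₗ[F] F) : ↥(algGrp F A) → ℂ := fun g =>
  ((Real.sqrt (Nat.card (coadjOrbitU lam)) : ℂ))⁻¹ *
    ∑ᶠ nu ∈ coadjOrbitU lam, thetaFunU θ nu g

/-- The underlying set of the algebra subgroup `L̄_λ = 1 + l̄_λ`. -/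
def LsetU (lam : A →ₗ[F] F) : Set ↥(algGrp F A) := {g | sndU g ∈ lbar lam}

/-- The underlying set of the algebra subgroup `S̄_λ = 1 + s̄_λ`. -/
def SsetU (lam : A →ₗ[F] F) : Set ↥(algGrp F A) := {g | sndU g ∈ sbar lam}

/-- The character `ξ_λ = Ind_{L̄_λ}^G(θ_λ)` of the algebra group `1 + A`. -/
def xiU (θ : AddChar F ℂ) (lam : A →ₗ[F] F) : ↥(algGrp F A) → ℂ :=
  indFun (LsetU lam) (thetaFunU θ lam)

/-- The set `Ξ_λ = {gλsg⁻¹ : g ∈ G, s ∈ S̄_λ}`, i.e. the functionals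
`ν(X) = λ(g⁻¹ X g s⁻¹)`. -/
def XiSet (lam : A →ₗ[F] F) : Set (A →ₗ[F] F) :=
  {nu | ∃ g s : ↥(algGrp F A), s ∈ SsetU lam ∧ ∀ X : A,
    nu X = lam (((((g : (Unitization F A)ˣ))⁻¹ : (Unitization F A)ˣ) * (X : Unitization F A) *
      ((g : (Unitization F A)ˣ) : Unitization F A) *
      ((((s : (Unitization F A)ˣ))⁻¹ : (Unitization F A)ˣ) : Unitization F A)).snd)}

end AlgebraGroup


/-- The right orbit `λG` of `λ` under `(λg)(X) = λ(Xg⁻¹)`. -/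
def rightOrbit {n : ℕ} {F : Type*} [Field F] [Fintype F]
    {S : NonUnitalSubalgebra F (Matrix (Fin n) (Fin n) F)} (lam : Dual S) : Set (Dual S) :=
  {nu | ∃ g : ↥(grp S), nu = conjDual 1 g⁻¹ lam}

/-- The set `⊥L_λ = {(i,j) ∈ P : ∃ k, λ_{ik} ≠ 0 and (j,k) ∈ P}`. -/
def perpL {n : ℕ} {F : Type*} [Field F] [Fintype F] (P : Set (Fin n × Fin n))
    {S : NonUnitalSubalgebra F (Matrix (Fin n) (Fin n) F)} (lam : Dual S) :
    Set (Fin n × Fin n) :=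
  {a | a ∈ P ∧ ∃ k : Fin n, lamEntry lam a.1 k ≠ 0 ∧ (a.2, k) ∈ P}

/-- The set `⊥S_λ = {(i,j) ∈ P : ∃ k, λ_{ik} ≠ 0, (j,k) ∈ P, (j,k) ∉ ⊥L_λ}`. -/
def perpS {n : ℕ} {F : Type*} [Field F] [Fintype F] (P : Set (Fin n × Fin n))
    {S : NonUnitalSubalgebra F (Matrix (Fin n) (Fin n) F)} (lam : Dual S) :
    Set (Fin n × Fin n) :=
  {a | a ∈ P ∧ ∃ k : Fin n, lamEntry lam a.1 k ≠ 0 ∧ (a.2, k) ∈ P ∧ (a.2, k) ∉ perpL P lam}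

/-- The subspace of elements of `S` vanishing at all positions in `T`. -/
def vanishOn {n : ℕ} {F : Type*} [Field F] [Fintype F]
    (S : NonUnitalSubalgebra F (Matrix (Fin n) (Fin n) F)) (T : Set (Fin n × Fin n)) :
    Submodule F ↥S where
  carrier := {X | ∀ a ∈ T, (X : Matrix (Fin n) (Fin n) F) a.1 a.2 = 0}
  add_mem' := by
    intro X Y hX hY a ha
    have h : ((X + Y : ↥S) : Matrix (Fin n) (Fin n) F) = ↑X + ↑Y := rfl
    rw [h, Matrix.add_apply, hX a ha, hY a ha, add_zero]
  zero_mem' := fun a _ => rfl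
  smul_mem' := by
    intro c X hX a ha
    have h : ((c • X : ↥S) : Matrix (Fin n) (Fin n) F) = c • ↑X := rfl
    rw [h, Matrix.smul_apply, hX a ha, smul_zero]

/-!
For `g ∈ G` the functional `λ g⁻¹` is `X ↦ λ(X (1 + h))` with `h = g⁻¹ - 1`, so the orbit `λG`
is `λ` plus the range of the linear map `h ↦ λ(· h)`; every `1 + h` is invertible since `h` is
strictly upper triangular. Writing `λ(X h) = ∑ λ_{ik} X_{ij} h_{jk}`, the coefficient of `X_{ij}`
can only be nonzero for `(i,j) ∈ ⊥L_λ`; for quasi-monomial `λ` each `e*_{ij}` with `(i,j) ∈ ⊥L_λ`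
is attained as `λ(· λ_{ik}⁻¹ e_{jk})`, since `k` determines `i`. The same two facts identify
`l¹_λ` and `s¹_λ`, and right multiplication by `g` permutes both the algebra and the right ideal
`l¹_λ`, so `l¹` and `s¹` are constant on the orbit.
-/

section FirstChainTerms

variable {A : Type*} [NonUnitalRing A] [Module F A] [SMulCommClass F A A] [IsScalarTower F A A]

lemma mem_lC_one {lam : A →ₗ[F] F} {X : A} : X ∈ lC lam 1 ↔ ∀ Y, lam (X * Y) = 0 := by
  simp [lC, chain, lker]

lemma mem_sC_one {lam : A →ₗ[F] F} {X : A} :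
    X ∈ sC lam 1 ↔ ∀ Y ∈ lC lam 1, lam (X * Y) = 0 := by
  simp [sC, lC, chain, lker]

lemma mul_mem_lC_one {lam : A →ₗ[F] F} {X : A} (hX : X ∈ lC lam 1) (Y : A) :
    X * Y ∈ lC lam 1 :=
  mem_lC_one.2 fun Z => by rw [mul_assoc]; exact mem_lC_one.1 hX _

end FirstChainTerms

section RightAction

def rightMulDual (lam : Dual S) : ↥S →ₗ[F] Dual S :=
  (LinearMap.mul F ↥S).flip.compr₂ lam

@[simp]
lemma rightMulDual_apply (lam : Dual S) (h X : ↥S) : rightMulDual lam h X = lam (X * h) := rfl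

lemma mul_mat_mem (Y : ↥S) (g : ↥(grp S)) : (Y : Matrix (Fin n) (Fin n) F) * mat g ∈ S := by
  simpa [mat] using conj_mem 1 g Y.2

lemma mat_mul_mat_inv (g : ↥(grp S)) : mat g * mat g⁻¹ = 1 := by
  simp [mat]

def mulRightEquiv (g : ↥(grp S)) : ↥S ≃ₗ[F] ↥S where
  toFun Y := ⟨Y * mat g, mul_mat_mem Y g⟩
  invFun Y := ⟨Y * mat g⁻¹, mul_mat_mem Y g⁻¹⟩
  map_add' X Y := Subtype.ext (add_mul _ _ _)
  map_smul' c X := Subtype.ext (Matrix.smul_mul c _ _)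
  left_inv Y := Subtype.ext (by simp [mul_assoc, mat_mul_mat_inv])
  right_inv Y := Subtype.ext (by simpa [mul_assoc] using congrArg (Y.1 * ·) (mat_mul_mat_inv g⁻¹))

lemma mulRightEquiv_eq_add (g : ↥(grp S)) (Y : ↥S) : mulRightEquiv g Y = Y + Y * gsub g :=
  Subtype.ext (by simp [mulRightEquiv, gsub, mul_sub])

lemma conjDual_one_apply (g : ↥(grp S)) (lam : Dual S) (X : ↥S) :
    conjDual 1 g lam X = lam (mulRightEquiv g X) :=
  congrArg lam (Subtype.ext (by simp [mulRightEquiv, mat]))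

lemma conjDual_one_apply_mul (g : ↥(grp S)) (lam : Dual S) (X Y : ↥S) :
    conjDual 1 g lam (X * Y) = lam (X * mulRightEquiv g Y) :=
  congrArg lam (Subtype.ext (by simp [mulRightEquiv, mat, mul_assoc]))

lemma conjDual_one_eq_add (g : ↥(grp S)) (lam : Dual S) :
    conjDual 1 g lam = lam + rightMulDual lam (gsub g) :=
  LinearMap.ext fun X => by simp [conjDual_one_apply, mulRightEquiv_eq_add]

lemma rightOrbit_eq_add_range (hS : ∀ w : ↥S, IsUnit (1 + (w : Matrix (Fin n) (Fin n) F)))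
    (lam : Dual S) :
    rightOrbit lam = {nu | ∃ mu ∈ LinearMap.range (rightMulDual lam), nu = lam + mu} := by
  ext nu
  constructor
  · rintro ⟨g, rfl⟩
    exact ⟨_, LinearMap.mem_range_self _ (gsub g⁻¹), conjDual_one_eq_add g⁻¹ lam⟩
  · rintro ⟨_, ⟨w, rfl⟩, rfl⟩
    have hg : (((hS w).unit : (Matrix (Fin n) (Fin n) F)ˣ) : Matrix (Fin n) (Fin n) F) - 1 ∈ S :=
      by simp
    let g : ↥(grp S) := ⟨(hS w).unit, hg⟩
    have hgw : gsub g = w := Subtype.ext (by simp [gsub, mat, g])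
    exact ⟨g⁻¹, by rw [inv_inv, conjDual_one_eq_add, hgw]⟩

lemma mulRightEquiv_symm (g : ↥(grp S)) : (mulRightEquiv g).symm = mulRightEquiv g⁻¹ := rfl

lemma mulRightEquiv_mem_lC_one {lam : Dual S} {Y : ↥S} (hY : Y ∈ lC lam 1) (g : ↥(grp S)) :
    mulRightEquiv g Y ∈ lC lam 1 := by
  rw [mulRightEquiv_eq_add]
  exact add_mem hY (mul_mem_lC_one hY _)

lemma lC_one_conjDual_one (g : ↥(grp S)) (lam : Dual S) :
    lC (conjDual 1 g lam) 1 = lC lam 1 := by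
  ext X
  simp only [mem_lC_one, conjDual_one_apply_mul]
  exact (mulRightEquiv g).surjective.forall (p := fun Y => lam (X * Y) = 0).symm

lemma sC_one_conjDual_one (g : ↥(grp S)) (lam : Dual S) :
    sC (conjDual 1 g lam) 1 = sC lam 1 := by
  ext X
  simp only [mem_sC_one, lC_one_conjDual_one, conjDual_one_apply_mul]
  refine ⟨fun hX Y hY => ?_, fun hX Y hY => hX _ (mulRightEquiv_mem_lC_one hY g)⟩
  simpa [← mulRightEquiv_symm] using hX _ (mulRightEquiv_mem_lC_one hY g⁻¹)

end RightAction

@[simp]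
lemma coordFn_apply (a : Fin n × Fin n) (X : ↥S) :
    coordFn S a X = (X : Matrix (Fin n) (Fin n) F) a.1 a.2 := rfl

section PatternAlgebra

variable {P : Set (Fin n × Fin n)} {hC : IsClosedPositions P}

lemma single_mem_patAlg {i j : Fin n} (h : (i, j) ∈ P) :
    Matrix.single i j (1 : F) ∈ patAlg n F P hC := by
  intro a b hab
  rw [Matrix.single_apply, if_neg]
  rintro ⟨rfl, rfl, -⟩
  exact hab h

def patSingle (hC : IsClosedPositions P) (i j : Fin n) : ↥(patAlg n F P hC) :=
  if h : (i, j) ∈ P then ⟨_, single_mem_patAlg h⟩ else 0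

lemma lamEntry_eq_apply_patSingle (lam : Dual (patAlg n F P hC)) (i j : Fin n) :
    lamEntry lam i j = lam (patSingle hC i j) := by
  unfold lamEntry patSingle
  by_cases h : (i, j) ∈ P
  · simp [h, single_mem_patAlg h]
  · have : Matrix.single i j (1 : F) ∉ patAlg n F P hC := fun hm => by
      simpa using hm i j h
    simp [h, this]

lemma smul_coe_patSingle (X : ↥(patAlg n F P hC)) (i j : Fin n) :
    (X : Matrix (Fin n) (Fin n) F) i j • ((patSingle hC i j : ↥(patAlg n F P hC)) : Matrix (Fin n) (Fin n) F) =
      Matrix.single i j ((X : Matrix (Fin n) (Fin n) F) i j) := by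
  by_cases h : (i, j) ∈ P
  · simp [patSingle, h, Matrix.smul_single]
  · simp [patSingle, h, X.2 i j h]

lemma eq_sum_patSingle (X : ↥(patAlg n F P hC)) :
    X = ∑ i, ∑ j, (X : Matrix (Fin n) (Fin n) F) i j • patSingle hC i j := by
  apply Subtype.ext
  simpa [AddSubmonoidClass.coe_finsetSum, smul_coe_patSingle] using
    Matrix.matrix_eq_sum_single (X : Matrix (Fin n) (Fin n) F)

lemma apply_eq_sum_lamEntry (lam : Dual (patAlg n F P hC)) (X : ↥(patAlg n F P hC)) :
    lam X = ∑ i, ∑ j, lamEntry lam i j * (X : Matrix (Fin n) (Fin n) F) i j := by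
  conv_lhs => rw [eq_sum_patSingle X]
  simp [lamEntry_eq_apply_patSingle, mul_comm]

lemma apply_mul_eq_sum_lamEntry (lam : Dual (patAlg n F P hC)) (X Z : ↥(patAlg n F P hC)) :
    lam (X * Z) = ∑ i, ∑ k, ∑ j, lamEntry lam i k *
      ((X : Matrix (Fin n) (Fin n) F) i j * (Z : Matrix (Fin n) (Fin n) F) j k) := by
  simp [apply_eq_sum_lamEntry, Matrix.mul_apply, Finset.mul_sum]

lemma mem_of_apply_ne_zero (Z : ↥(patAlg n F P hC)) {j k : Fin n}
    (h : (Z : Matrix (Fin n) (Fin n) F) j k ≠ 0) : (j, k) ∈ P :=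
  by_contra fun h' => h (Z.2 j k h')

lemma apply_mul_eq_zero {lam : Dual (patAlg n F P hC)} {X Z : ↥(patAlg n F P hC)}
    (h : ∀ i j k, lamEntry lam i k ≠ 0 → (i, j) ∈ P → (Z : Matrix (Fin n) (Fin n) F) j k ≠ 0 →
      (X : Matrix (Fin n) (Fin n) F) i j = 0) :
    lam (X * Z) = 0 := by
  rw [apply_mul_eq_sum_lamEntry]
  refine Finset.sum_eq_zero fun i _ => Finset.sum_eq_zero fun k _ => Finset.sum_eq_zero fun j _ => ?_
  by_cases hik : lamEntry lam i k = 0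
  · simp [hik]
  by_cases hij : (i, j) ∈ P
  · by_cases hjk : (Z : Matrix (Fin n) (Fin n) F) j k = 0
    · simp [hjk]
    · simp [h i j k hik hij hjk]
  · simp [X.2 i j hij]

lemma apply_mul_patSingle {lam : Dual (patAlg n F P hC)} (hqm : QuasiMonomial lam)
    (X : ↥(patAlg n F P hC)) {i j k : Fin n} (hik : lamEntry lam i k ≠ 0) (hjk : (j, k) ∈ P) :
    lam (X * patSingle hC j k) = lamEntry lam i k * (X : Matrix (Fin n) (Fin n) F) i j := by
  rw [apply_mul_eq_sum_lamEntry, Finset.sum_eq_single i]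
  · simp [patSingle, hjk, Matrix.single_apply, ite_and]
  · intro i' _ hi'
    have : lamEntry lam i' k = 0 := by_contra fun h => hi' (hqm.2 i' i k h hik)
    simp [patSingle, hjk, Matrix.single_apply, ite_and, this]
  · simp

lemma lC_one_eq_vanishOn_perpL {lam : Dual (patAlg n F P hC)} (hqm : QuasiMonomial lam) :
    lC lam 1 = vanishOn (patAlg n F P hC) (perpL P lam) := by
  ext X
  rw [mem_lC_one]
  constructor
  · rintro hX ⟨i, j⟩ ⟨-, k, hik, hjk⟩
    have h := hX (patSingle hC j k)
    rw [apply_mul_patSingle hqm X hik hjk] at h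
    exact (mul_eq_zero.1 h).resolve_left hik
  · intro hX Z
    exact apply_mul_eq_zero fun i j k hik hij hjk =>
      hX (i, j) ⟨hij, k, hik, mem_of_apply_ne_zero Z hjk⟩

lemma patSingle_mem_vanishOn {T : Set (Fin n × Fin n)} {j k : Fin n} (h : (j, k) ∉ T) :
    patSingle hC j k ∈ vanishOn (patAlg n F P hC) T := by
  rintro ⟨a, b⟩ hab
  by_cases hjk : (j, k) ∈ P
  · simp only [patSingle, hjk, dite_true, Matrix.single_apply]
    rw [if_neg]
    rintro ⟨rfl, rfl, -⟩
    exact h hab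
  · simp [patSingle, hjk]

lemma sC_one_eq_vanishOn_perpS {lam : Dual (patAlg n F P hC)} (hqm : QuasiMonomial lam) :
    sC lam 1 = vanishOn (patAlg n F P hC) (perpS P lam) := by
  ext X
  rw [mem_sC_one, lC_one_eq_vanishOn_perpL hqm]
  constructor
  · rintro hX ⟨i, j⟩ ⟨-, k, hik, hjk, hjkL⟩
    have h := hX (patSingle hC j k) (patSingle_mem_vanishOn hjkL)
    rw [apply_mul_patSingle hqm X hik hjk] at h
    exact (mul_eq_zero.1 h).resolve_left hik
  · intro hX Z hZ
    exact apply_mul_eq_zero fun i j k hik hij hjk =>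
      hX (i, j) ⟨hij, k, hik, mem_of_apply_ne_zero Z hjk, fun hL => hjk (hZ _ hL)⟩

lemma range_rightMulDual_eq_span {lam : Dual (patAlg n F P hC)} (hqm : QuasiMonomial lam) :
    LinearMap.range (rightMulDual lam) =
      Submodule.span F (coordFn (patAlg n F P hC) '' perpL P lam) := by
  apply le_antisymm
  · rintro _ ⟨h, rfl⟩
    rw [Set.image_eq_range]
    refine mem_span_of_iInf_ker_le_ker fun X hX => ?_
    have hX : X ∈ lC lam 1 := by
      rw [lC_one_eq_vanishOn_perpL hqm]
      exact fun a ha => by simpa using (Submodule.mem_iInf _).1 hX ⟨a, ha⟩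
    exact mem_lC_one.1 hX h
  · rw [Submodule.span_le]
    rintro _ ⟨⟨i, j⟩, ⟨-, k, hik, hjk⟩, rfl⟩
    refine ⟨(lamEntry lam i k)⁻¹ • patSingle hC j k, LinearMap.ext fun X => ?_⟩
    simp [apply_mul_patSingle hqm X hik hjk, hik]

end PatternAlgebra

lemma patAlg_le_uAlg {P : Set (Fin n × Fin n)} (hP : ∀ a ∈ P, a.1 < a.2)
    (hC : IsClosedPositions P) : patAlg n F P hC ≤ uAlg n F :=
  fun _ hM i j hji => hM i j fun hij => (hP _ hij).not_ge hji

lemma isUnit_one_add_of_mem_uAlg {w : Matrix (Fin n) (Fin n) F} (hw : w ∈ uAlg n F) :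
    IsUnit (1 + w) := by
  have hupper : (1 + w).IsUpperTriangular := fun i j (hji : j < i) => by
    rw [Matrix.add_apply, Matrix.one_apply_ne hji.ne', hw i j hji.le, add_zero]
  rw [Matrix.isUnit_iff_isUnit_det, Matrix.det_of_isUpperTriangular hupper]
  simp [hw _ _ le_rfl]

theorem statement8_general (F : Type) [Field F] [Fintype F]
    (n : ℕ) (P : Set (Fin n × Fin n)) (hP : ∀ a ∈ P, a.1 < a.2) (hC : IsClosedPositions P)
    (lam : Dual (patAlg n F P hC)) (hqm : QuasiMonomial lam) :
    rightOrbit lam = {nu | ∃ mu ∈ Submodule.span F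
        (coordFn (patAlg n F P hC) '' perpL P lam), nu = lam + mu} ∧
    ∀ nu ∈ rightOrbit lam,
      lC nu 1 = vanishOn (patAlg n F P hC) (perpL P lam) ∧
      sC nu 1 = vanishOn (patAlg n F P hC) (perpS P lam) := by
  refine ⟨?_, ?_⟩
  · rw [rightOrbit_eq_add_range fun w => isUnit_one_add_of_mem_uAlg (patAlg_le_uAlg hP hC w.2),
      range_rightMulDual_eq_span hqm]
  · rintro _ ⟨g, rfl⟩
    rw [lC_one_conjDual_one, sC_one_conjDual_one]
    exact ⟨lC_one_eq_vanishOn_perpL hqm, sC_one_eq_vanishOn_perpS hqm⟩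

/-- For a quasi-monomial `λ` on a pattern algebra: the right orbit `λG`
equals `λ + span{e*_{ij} : (i,j) ∈ ⊥L_λ}`, and for every `μ ∈ λG`, `l¹_μ` and `s¹_μ` are
the subspaces of matrices vanishing on `⊥L_λ` and `⊥S_λ` respectively. -/
theorem statement8 (p : ℕ) (hp : p.Prime) (F : Type) [Field F] [Fintype F] [CharP F p]
    (n : ℕ) (P : Set (Fin n × Fin n)) (hP : ∀ a ∈ P, a.1 < a.2) (hC : IsClosedPositions P)
    (lam : Dual (patAlg n F P hC)) (hqm : QuasiMonomial lam) :
    rightOrbit lam = {nu | ∃ mu ∈ Submodule.span F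
        (coordFn (patAlg n F P hC) '' perpL P lam), nu = lam + mu} ∧
    ∀ nu ∈ rightOrbit lam,
      lC nu 1 = vanishOn (patAlg n F P hC) (perpL P lam) ∧
      sC nu 1 = vanishOn (patAlg n F P hC) (perpS P lam) :=
  statement8_general F n P hP hC lam hqm

end Paper
end
end

section
/- Let n > 1 and let p be the characteristic of F_q. The exponential Kirillov function ψ^Exp_κ of A_n(q), given by ψ^Exp_κ(Exp(X)) = θ(X_{1,n}) for X ∈ a_n(q), is a character of A_n(q) if and only if n ≤ p (equivalently, Exp(X) ↦ θ(X_{1,n}) is a group homomorphism A_n(q) → ℂ^× if and only if n ≤ p). -/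
open scoped BigOperators Classical ComplexOrder
open Complex

set_option linter.unusedSectionVars false

noncomputable section

namespace Paper

variable {F : Type*} [Field F]

/-! ### Algebra groups of matrix algebras -/

variable {n : ℕ}

variable [Fintype F] {S : NonUnitalSubalgebra F (Matrix (Fin n) (Fin n) F)}

/-- The functional `κ ∈ a_n(q)*`, `κ(X) = X_{1,n}`. -/
def kappaDual (n : ℕ) (hn : 1 < n) (F : Type) [Field F] [Fintype F] : Dual (aAlg n F) :=
  coordFn (aAlg n F) (⟨0, by omega⟩, ⟨n - 1, by omega⟩)

/-!
Write `J` for the nilpotent shift matrix. An element of `a_n(q)` is a polynomial in `J` without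
constant term, so `a_n(q)` is commutative and every product of `n` of its elements vanishes. For
commuting `X` and `Y`, `Exp X * Exp Y` differs from `Exp (X + Y)` by the terms
`X^i Y^j / (i! j!)` with `i, j < p ≤ i + j`.

If `n ≤ p` these terms vanish, so `Exp` is additive on `a_n(q)` with trivial kernel, hence a
bijection onto the finite group `A_n(q)`, and `Exp X ↦ θ(X_{1,n})` is a homomorphism. Since it
takes the value `1` at `1`, being a character is the same as being multiplicative: a character
of degree one is the trace of a one-dimensional representation.

If `n > p`, take `X = a J^(n-p)` and `Y = b J`. The surviving terms all lie in the corner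
`J^(n-1)`, with a coefficient `carry p (n - p) a b` that takes every value `d`: it is linear in
`a` when `n - p ≥ 2`, and for `n = p + 1` it is a nonzero form of degree `p` in `(a, b)`, which
Frobenius makes surjective. For `θ d ≠ 1` the function is `1` at `Exp X` and `Exp Y` but `θ d`
at their product.
-/

end Paper

section TruncatedExp

open Finset
open scoped Nat

variable (K : Type*) [Field K] {R : Type*} [Ring R] [Algebra K R]

def expTrunc (p : ℕ) (x : R) : R := ∑ i ∈ range p, (i ! : K)⁻¹ • x ^ i

variable {K}

lemma expTrunc_zero {p : ℕ} (hp : 0 < p) : expTrunc K p (0 : R) = 1 := by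
  obtain ⟨q, rfl⟩ := Nat.exists_eq_add_one.mpr hp
  simp [expTrunc, sum_range_succ']

lemma expTrunc_succ (p : ℕ) (x : R) :
    expTrunc K (p + 1) x = 1 + x * ∑ i ∈ range p, ((i + 1)! : K)⁻¹ • x ^ i := by
  rw [expTrunc, sum_range_succ', mul_sum, add_comm]
  simp [pow_succ']

lemma natCast_factorial_ne_zero {p : ℕ} [CharP K p] (hp : p.Prime) {i : ℕ} (hi : i < p) :
    (i ! : K) ≠ 0 := by
  rw [Ne, CharP.cast_eq_zero_iff K p, hp.dvd_factorial]
  omega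

lemma inv_factorial_mul_choose {p : ℕ} [CharP K p] (hp : p.Prime) {i j : ℕ} (h : i + j < p) :
    ((i + j)! : K)⁻¹ * (i + j).choose i = ((i ! : K) * j !)⁻¹ := by
  have hi := natCast_factorial_ne_zero (K := K) hp (i := i) (by omega)
  have hj := natCast_factorial_ne_zero (K := K) hp (i := j) (by omega)
  have hij := natCast_factorial_ne_zero (K := K) hp h
  have e : ((i + j).choose i : K) * i ! * j ! = (i + j)! := by
    rw [Nat.choose_symm_add]
    exact_mod_cast congrArg (Nat.cast : ℕ → K) (Nat.add_choose_mul_factorial_mul_factorial i j)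
  have hc : ((i + j).choose i : K) ≠ 0 := fun h0 => hij (by rw [← e, h0, zero_mul, zero_mul])
  rw [← e]
  field_simp

lemma sum_range_sum_antidiagonal {M : Type*} [AddCommMonoid M] (p : ℕ) (g : ℕ × ℕ → M) :
    ∑ k ∈ range p, ∑ ij ∈ antidiagonal k, g ij =
      ∑ ij ∈ range p ×ˢ range p with ij.1 + ij.2 < p, g ij := by
  rw [← sum_fiberwise_of_maps_to (g := fun ij : ℕ × ℕ => ij.1 + ij.2) (t := range p)
    (fun ij hij => by simpa using (mem_filter.mp hij).2)]
  refine sum_congr rfl fun k hk => sum_congr ?_ fun _ _ => rfl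
  ext ⟨i, j⟩
  simp only [HasAntidiagonal.mem_antidiagonal, mem_filter, mem_product, mem_range] at hk ⊢
  omega

lemma expTrunc_mul_expTrunc {p : ℕ} [CharP K p] (hp : p.Prime) {x y : R} (hxy : Commute x y) :
    expTrunc K p x * expTrunc K p y = expTrunc K p (x + y) +
      ∑ ij ∈ range p ×ˢ range p with p ≤ ij.1 + ij.2,
        ((ij.1 ! : K) * ij.2 !)⁻¹ • (x ^ ij.1 * y ^ ij.2) := by
  have hbinom : ∀ k ∈ range p, (k ! : K)⁻¹ • (x + y) ^ k =
      ∑ ij ∈ antidiagonal k, ((ij.1 ! : K) * ij.2 !)⁻¹ • (x ^ ij.1 * y ^ ij.2) := by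
    intro k hk
    rw [hxy.add_pow', smul_sum]
    refine sum_congr rfl fun ij hij => ?_
    rw [HasAntidiagonal.mem_antidiagonal] at hij
    subst hij
    rw [← Nat.cast_smul_eq_nsmul K, smul_smul,
      inv_factorial_mul_choose hp (by simpa using hk)]
  rw [expTrunc, expTrunc, expTrunc, sum_congr rfl hbinom, sum_range_sum_antidiagonal,
    sum_mul_sum, ← sum_product', ← sum_filter_add_sum_filter_not _ (fun ij => ij.1 + ij.2 < p)]
  simp only [not_lt, smul_mul_smul_comm, mul_inv]

lemma expTrunc_add_of_mul_eq_zero {p : ℕ} (hp : 2 ≤ p) {w u : R} (hwu : w * u = 0)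
    (huw : u * w = 0) (huu : u * u = 0) : expTrunc K p (w + u) = expTrunc K p w + u := by
  have hpow : ∀ k, (w + u) ^ (k + 2) = w ^ (k + 2) := by
    intro k
    induction k with
    | zero => simp [sq, add_mul, mul_add, hwu, huw, huu]
    | succ k ih =>
      rw [pow_succ, ih, mul_add, pow_succ w (k + 1), mul_assoc _ w u, hwu, mul_zero, add_zero,
        ← pow_succ, ← pow_succ]
  obtain ⟨q, rfl⟩ := Nat.exists_eq_add_of_le' hp
  simp only [expTrunc, sum_range_succ', hpow, zero_add, pow_one, pow_zero, Nat.factorial_one,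
    Nat.factorial_zero, Nat.cast_one, inv_one, one_smul]
  abel

lemma eq_zero_of_expTrunc_eq_one {p : ℕ} (hp : 2 ≤ p) {z : R} (hz : IsNilpotent z)
    (h : expTrunc K p z = 1) : z = 0 := by
  obtain ⟨q, rfl⟩ := Nat.exists_eq_add_of_le' hp
  set v := ∑ i ∈ range q, ((i + 2)! : K)⁻¹ • z ^ i
  have hw : ∑ i ∈ range (q + 1), ((i + 1)! : K)⁻¹ • z ^ i = 1 + z * v := by
    rw [sum_range_succ', mul_sum, add_comm]
    simp [pow_succ']
  have hunit : IsUnit (1 + z * v) :=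
    ((Commute.sum_right _ _ _ fun i _ => ((Commute.refl z).pow_right i).smul_right _)
      |>.isNilpotent_mul_right hz).isUnit_one_add
  rw [expTrunc_succ, hw, add_eq_left] at h
  exact hunit.mul_left_eq_zero.mp h

end TruncatedExp

lemma LinearMap.trace_mul_of_finrank_eq_one {K V : Type*} [Field K] [AddCommGroup V] [Module K V]
    (h : Module.finrank K V = 1) (u v : V →ₗ[K] V) :
    trace K V (u * v) = trace K V u * trace K V v := by
  obtain ⟨c, rfl, -⟩ := u.existsUnique_eq_smul_id_of_finrank_eq_one h
  obtain ⟨d, rfl, -⟩ := v.existsUnique_eq_smul_id_of_finrank_eq_one h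
  have : Module.Finite K V := Module.finite_of_finrank_eq_succ h
  have htr : trace K V LinearMap.id = 1 := by rw [LinearMap.trace_id, h, Nat.cast_one]
  rw [smul_mul_smul_comm, Module.End.mul_eq_comp, LinearMap.id_comp, map_smul, map_smul,
    map_smul, htr, smul_eq_mul, smul_eq_mul, smul_eq_mul, mul_one, mul_one, mul_one]

lemma exists_monoidHom_units_iff {G M : Type*} [Group G] [Monoid M] {f : G → M} (hf : f 1 = 1) :
    (∃ φ : G →* Mˣ, ∀ g, f g = φ g) ↔ ∀ g h, f (g * h) = f g * f h := by
  refine ⟨fun ⟨φ, hφ⟩ g h => by simp [hφ], fun hmul => ?_⟩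
  exact ⟨MonoidHom.toHomUnits ⟨⟨f, hf⟩, hmul⟩, fun _ => rfl⟩

namespace Paper

lemma isCharacter_iff_map_mul {G : Type} [Group G] {f : G → ℂ} (hf : f 1 = 1) :
    IsCharacter f ↔ ∀ g h, f (g * h) = f g * f h := by
  constructor
  · rintro ⟨V, rfl⟩ g h
    have h1 : Module.finrank ℂ V = 1 := by exact_mod_cast (FDRep.char_one V).symm.trans hf
    simp only [FDRep.character, map_mul, LinearMap.trace_mul_of_finrank_eq_one h1]
  · intro hmul
    let ρ : Representation ℂ G ℂ :=
      (algebraMap ℂ (Module.End ℂ ℂ) : ℂ →* Module.End ℂ ℂ).comp ⟨⟨f, hf⟩, hmul⟩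
    refine ⟨FDRep.of ρ, funext fun g => ?_⟩
    show LinearMap.trace ℂ ℂ (algebraMap ℂ (Module.End ℂ ℂ) (f g)) = f g
    simp [Algebra.algebraMap_eq_smul_one]

section ShiftMatrix

open Finset

variable {n : ℕ} {R : Type*} [Semiring R]

def shiftMatrix (n : ℕ) (R : Type*) [Semiring R] : Matrix (Fin n) (Fin n) R :=
  Matrix.of fun i j => if (i : ℕ) + 1 = j then 1 else 0

lemma shiftMatrix_apply (i j : Fin n) :
    shiftMatrix n R i j = if (i : ℕ) + 1 = j then 1 else 0 := rfl

lemma shiftMatrix_pow_apply (k : ℕ) (i j : Fin n) :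
    (shiftMatrix n R ^ k) i j = if (i : ℕ) + k = j then 1 else 0 := by
  induction k generalizing i with
  | zero => simp [Matrix.one_apply, Fin.ext_iff]
  | succ k ih =>
    rw [pow_succ', Matrix.mul_apply]
    simp only [ih, shiftMatrix_apply, ite_mul, one_mul, zero_mul]
    by_cases hi : (i : ℕ) + 1 < n
    · rw [sum_eq_single ⟨i + 1, hi⟩ (fun l _ hl => if_neg fun h => hl (Fin.ext h.symm))
        (by simp)]
      simp only [if_true]
      congr 1
      simp only [eq_iff_iff]
      omega
    · rw [sum_eq_zero fun l _ => if_neg (by omega), if_neg (by omega)]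

lemma shiftMatrix_pow_eq_zero {k : ℕ} (hk : n ≤ k) : shiftMatrix n R ^ k = 0 := by
  ext i j
  rw [shiftMatrix_pow_apply, Matrix.zero_apply, if_neg (by omega)]

end ShiftMatrix

section ShiftAlgebra

open Finset Polynomial

variable {n : ℕ} {K : Type*} [Field K] [Fintype K]

lemma shiftMatrix_pow_mem_aAlg {k : ℕ} (hk : 1 ≤ k) : shiftMatrix n K ^ k ∈ aAlg n K := by
  refine ⟨fun i j hij => ?_, fun i j i' j' _ _ h => ?_⟩
  · rw [shiftMatrix_pow_apply, if_neg (by rw [Fin.le_def] at hij; omega)]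
  · simp only [shiftMatrix_pow_apply]
    congr 1
    simp only [eq_iff_iff]
    omega

lemma exists_eq_aeval_of_mem_aAlg {M : Matrix (Fin n) (Fin n) K} (hM : M ∈ aAlg n K) :
    ∃ q : K[X], X ∣ q ∧ M = aeval (shiftMatrix n K) q := by
  rcases Nat.eq_zero_or_pos n with rfl | hn
  · exact ⟨0, dvd_zero _, Subsingleton.elim _ _⟩
  obtain ⟨hupper, hconst⟩ := hM
  -- `M i j` depends only on `j - i`, so `M = ∑ₖ M₀ₖ Jᵏ`
  refine ⟨∑ k : Fin n, C (M ⟨0, hn⟩ k) * X ^ (k : ℕ), ?_, ?_⟩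
  · rw [X_dvd_iff, finsetSum_coeff]
    simp only [coeff_C_mul, coeff_X_pow]
    rw [sum_eq_single ⟨0, hn⟩ (fun k _ hk => by rw [if_neg (fun h => hk (Fin.ext h.symm)),
      mul_zero]) (by simp)]
    simp [hupper _ _ le_rfl]
  · ext i j
    simp only [map_sum, map_mul, aeval_C, aeval_X_pow, Matrix.sum_apply,
      Algebra.algebraMap_eq_smul_one, smul_mul_assoc, one_mul, Matrix.smul_apply,
      shiftMatrix_pow_apply, smul_eq_mul, mul_ite, mul_one, mul_zero]
    by_cases hij : (i : ℕ) ≤ j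
    · rw [sum_eq_single ⟨j - i, by omega⟩ (fun k _ hk => if_neg fun h => hk (Fin.ext (by
        simp only; omega))) (by simp), if_pos (by simp only; omega)]
      rcases hij.lt_or_eq with hlt | heq
      · exact hconst _ _ _ _ hlt (by simp only; omega) (by simp only; omega)
      · have hji : j = i := Fin.ext heq.symm
        subst hji
        simp only [Nat.sub_self]
        rw [hupper _ _ le_rfl, hupper _ _ le_rfl]
    · rw [sum_eq_zero fun k _ => if_neg (by omega), hupper _ _ (by rw [Fin.le_def]; omega)]

lemma commute_of_mem_aAlg {M N : Matrix (Fin n) (Fin n) K} (hM : M ∈ aAlg n K)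
    (hN : N ∈ aAlg n K) : Commute M N := by
  obtain ⟨q, -, rfl⟩ := exists_eq_aeval_of_mem_aAlg hM
  obtain ⟨r, -, rfl⟩ := exists_eq_aeval_of_mem_aAlg hN
  exact (Commute.all q r).map (aeval (shiftMatrix n K))

lemma pow_mul_pow_eq_zero_of_mem_aAlg {M N : Matrix (Fin n) (Fin n) K} (hM : M ∈ aAlg n K)
    (hN : N ∈ aAlg n K) {i j : ℕ} (hij : n ≤ i + j) : M ^ i * N ^ j = 0 := by
  obtain ⟨q, ⟨q', rfl⟩, rfl⟩ := exists_eq_aeval_of_mem_aAlg hM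
  obtain ⟨r, ⟨r', rfl⟩, rfl⟩ := exists_eq_aeval_of_mem_aAlg hN
  have h : (X * q') ^ i * (X * r') ^ j = X ^ (i + j) * (q' ^ i * r' ^ j) := by ring
  rw [← map_pow, ← map_pow, ← map_mul, h, map_mul, map_pow, aeval_X,
    shiftMatrix_pow_eq_zero hij, zero_mul]

lemma isNilpotent_of_mem_aAlg {M : Matrix (Fin n) (Fin n) K} (hM : M ∈ aAlg n K) :
    IsNilpotent M :=
  ⟨n, by simpa using pow_mul_pow_eq_zero_of_mem_aAlg hM hM (i := n) (j := 0) le_rfl⟩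

end ShiftAlgebra

section ExpOnShiftAlgebra

open Finset

variable {n p : ℕ} {K : Type*} [Field K] [Fintype K]

lemma expTrunc_sub_one_mem_aAlg (hp : 0 < p) {M : Matrix (Fin n) (Fin n) K}
    (hM : M ∈ aAlg n K) : expTrunc K p M - 1 ∈ aAlg n K := by
  have hpow : ∀ i, M ^ (i + 1) ∈ aAlg n K := fun i => by
    induction i with
    | zero => simpa using hM
    | succ i ih => exact pow_succ M (i + 1) ▸ mul_mem ih hM
  obtain ⟨q, rfl⟩ := Nat.exists_eq_add_one.mpr hp
  rw [expTrunc_succ, add_sub_cancel_left, mul_sum]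
  refine sum_mem fun i _ => ?_
  rw [mul_smul_comm, ← pow_succ']
  exact SMulMemClass.smul_mem _ (hpow i)

lemma exists_mat_eq_expTrunc (hp : 0 < p) {M : Matrix (Fin n) (Fin n) K} (hM : M ∈ aAlg n K) :
    ∃ g : grp (aAlg n K), mat g = expTrunc K p M := by
  have hmem := expTrunc_sub_one_mem_aAlg hp hM
  have hunit : IsUnit (expTrunc K p M) := by
    simpa using (isNilpotent_of_mem_aAlg hmem).isUnit_one_add
  exact ⟨⟨hunit.unit, by simpa [mem_grp_iff] using hmem⟩, rfl⟩

lemma expTrunc_mul_expTrunc_of_le [CharP K p] (hp : p.Prime) (hnp : n ≤ p)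
    {M N : Matrix (Fin n) (Fin n) K} (hM : M ∈ aAlg n K) (hN : N ∈ aAlg n K) :
    expTrunc K p M * expTrunc K p N = expTrunc K p (M + N) := by
  rw [expTrunc_mul_expTrunc hp (commute_of_mem_aAlg hM hN), add_eq_left]
  refine sum_eq_zero fun ij hij => ?_
  rw [pow_mul_pow_eq_zero_of_mem_aAlg hM hN (hnp.trans (mem_filter.mp hij).2), smul_zero]

lemma exists_mat_eq_expTrunc_of_le [CharP K p] (hp : p.Prime) (hnp : n ≤ p)
    (g : grp (aAlg n K)) : ∃ M ∈ aAlg n K, mat g = expTrunc K p M := by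
  let e : aAlg n K → aAlg n K := fun M =>
    ⟨expTrunc K p (M : Matrix (Fin n) (Fin n) K) - 1, expTrunc_sub_one_mem_aAlg hp.pos M.2⟩
  have he : e.Injective := by
    rintro ⟨M, hM⟩ ⟨N, hN⟩ h
    have hMN : expTrunc K p M = expTrunc K p N := by simpa [e] using congrArg Subtype.val h
    have h1 : expTrunc K p (M - N) = 1 := by
      rw [sub_eq_add_neg, ← expTrunc_mul_expTrunc_of_le hp hnp hM (neg_mem hN), hMN,
        expTrunc_mul_expTrunc_of_le hp hnp hN (neg_mem hN), add_neg_cancel, expTrunc_zero hp.pos]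
    exact Subtype.ext (sub_eq_zero.mp (eq_zero_of_expTrunc_eq_one hp.two_le
      (isNilpotent_of_mem_aAlg (sub_mem hM hN)) h1))
  obtain ⟨⟨M, hM⟩, hgM⟩ := (Finite.injective_iff_surjective.mp he) ⟨mat g - 1, mat_mem g⟩
  exact ⟨M, hM, by simpa [e] using (congrArg Subtype.val hgM).symm⟩

end ExpOnShiftAlgebra

section Carry

open Finset Polynomial
open scoped Nat

variable {K : Type*} [Field K]

/-- The coefficient of `J ^ (s + p - 1)` in `Exp (a J^s) * Exp (b J) - Exp (a J^s + b J)`,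
for `J` the nilpotent shift matrix of size `s + p`. -/
def carry (p s : ℕ) (a b : K) : K :=
  ∑ ij ∈ range p ×ˢ range p with p ≤ ij.1 + ij.2 ∧ s * ij.1 + ij.2 = s + p - 1,
    ((ij.1 ! : K) * ij.2 !)⁻¹ * (a ^ ij.1 * b ^ ij.2)

lemma carry_of_two_le {p s : ℕ} (hp : 2 ≤ p) (hs : 2 ≤ s) (a b : K) :
    carry p s a b = ((p - 1)! : K)⁻¹ * (a * b ^ (p - 1)) := by
  have hA : {ij ∈ range p ×ˢ range p | p ≤ ij.1 + ij.2 ∧ s * ij.1 + ij.2 = s + p - 1}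
      = {(1, p - 1)} := by
    ext ⟨i, j⟩
    simp only [mem_filter, mem_product, mem_range, mem_singleton, Prod.mk.injEq]
    constructor
    · rintro ⟨⟨hi, hj⟩, hij, h⟩
      obtain _ | _ | i := i
      · omega
      · omega
      · have : 2 * i ≤ s * i := Nat.mul_le_mul_right i hs
        have e : s * (i + 1 + 1) = s * i + 2 * s := by ring
        omega
    · rintro ⟨rfl, rfl⟩
      omega
  simp [carry, hA]

lemma carry_one_mul {p : ℕ} (μ a b : K) : carry p 1 (μ * a) (μ * b) = μ ^ p * carry p 1 a b := by
  rw [carry, carry, mul_sum]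
  refine sum_congr rfl fun ij hij => ?_
  have hp : ij.1 + ij.2 = p := by simp only [mem_filter, mem_product, mem_range] at hij; omega
  rw [mul_pow, mul_pow, ← hp, pow_add]
  ring

lemma exists_carry_one_ne_zero [Fintype K] {p : ℕ} [CharP K p] (hp : p.Prime) :
    ∃ a : K, carry p 1 a 1 ≠ 0 := by
  set A := {ij ∈ range p ×ˢ range p | p ≤ ij.1 + ij.2 ∧ 1 * ij.1 + ij.2 = 1 + p - 1}
  set P : K[X] := ∑ ij ∈ A, C ((ij.1 ! : K) * ij.2 !)⁻¹ * X ^ ij.1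
  have hmem : ∀ ij ∈ A, ij.1 < p ∧ ij.1 + ij.2 = p := fun ij hij => by
    simp only [A, mem_filter, mem_product, mem_range] at hij
    omega
  have hcoeff : P.coeff 1 = ((p - 1)! : K)⁻¹ := by
    rw [finsetSum_coeff, sum_eq_single (1, p - 1)]
    · simp
    · intro ij hij hne
      rw [coeff_C_mul, coeff_X_pow, if_neg, mul_zero]
      have := hmem ij hij
      exact fun h => hne (Prod.ext h.symm (by simp only; omega))
    · have := hp.two_le
      simp [A]
      omega
  have hP : P ≠ 0 := fun h => natCast_factorial_ne_zero hp (Nat.sub_lt hp.pos one_pos)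
    (inv_eq_zero.mp (by rw [← hcoeff, h, coeff_zero]))
  have hdeg : P.natDegree < Fintype.card K := by
    obtain ⟨k, -, hcard⟩ := FiniteField.card K p
    refine (natDegree_sum_le_of_forall_le _ _ fun ij hij => ?_).trans_lt
      ((Nat.sub_lt hp.pos one_pos).trans_le (hcard ▸ Nat.le_self_pow k.ne_zero p))
    exact (natDegree_C_mul_le _ _).trans (by rw [natDegree_X_pow]; have := hmem ij hij; omega)
  obtain ⟨a, ha⟩ := P.exists_eval_ne_zero_of_natDegree_lt_card hP (by simpa using hdeg)
  exact ⟨a, by simpa [P, A, carry, eval_finsetSum] using ha⟩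

lemma exists_carry_eq [Fintype K] {p s : ℕ} [CharP K p] (hp : p.Prime) (hs : 1 ≤ s) (d : K) :
    ∃ a b : K, carry p s a b = d := by
  rcases hs.eq_or_lt with rfl | hs
  · obtain ⟨a, ha⟩ := exists_carry_one_ne_zero (K := K) hp
    have := Fact.mk hp
    obtain ⟨μ, hμ⟩ := surjective_frobenius K p (d / carry p 1 a 1)
    refine ⟨μ * a, μ * 1, ?_⟩
    rw [carry_one_mul, ← frobenius_def, hμ, div_mul_cancel₀ _ ha]
  · refine ⟨(p - 1)! * d, 1, ?_⟩
    rw [carry_of_two_le hp.two_le hs, one_pow, mul_one, ← mul_assoc,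
      inv_mul_cancel₀ (natCast_factorial_ne_zero (K := K) hp (Nat.sub_lt hp.pos one_pos)), one_mul]

end Carry

section Witness

open Finset
open scoped Nat

variable {n p : ℕ} {K : Type*} [Field K]

lemma expTrunc_mul_expTrunc_shiftMatrix [CharP K p] (hp : p.Prime) {s : ℕ} (hs : 1 ≤ s)
    (hn : n = s + p) (a b : K) :
    expTrunc K p (a • shiftMatrix n K ^ s) * expTrunc K p (b • shiftMatrix n K) =
      expTrunc K p (a • shiftMatrix n K ^ s + b • shiftMatrix n K +
        carry p s a b • shiftMatrix n K ^ (n - 1)) := by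
  set J := shiftMatrix n K
  have hJ : ∀ k, n ≤ k → J ^ k = 0 := fun k hk => shiftMatrix_pow_eq_zero hk
  have hcomm : Commute (a • J ^ s) (b • J) :=
    (((Commute.refl J).pow_left s).smul_left a).smul_right b
  have hp2 := hp.two_le
  rw [expTrunc_mul_expTrunc hp hcomm, expTrunc_add_of_mul_eq_zero (w := a • J ^ s + b • J)
    (u := carry p s a b • J ^ (n - 1)) hp2]
  · congr 1
    calc ∑ ij ∈ range p ×ˢ range p with p ≤ ij.1 + ij.2,
          ((ij.1 ! : K) * ij.2 !)⁻¹ • ((a • J ^ s) ^ ij.1 * (b • J) ^ ij.2)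
        = ∑ ij ∈ range p ×ˢ range p with p ≤ ij.1 + ij.2,
          (((ij.1 ! : K) * ij.2 !)⁻¹ * (a ^ ij.1 * b ^ ij.2)) • J ^ (s * ij.1 + ij.2) := by
          refine sum_congr rfl fun ij _ => ?_
          rw [smul_pow, smul_pow, ← pow_mul, smul_mul_smul_comm, ← pow_add, smul_smul]
      _ = ∑ ij ∈ range p ×ˢ range p with p ≤ ij.1 + ij.2 ∧ s * ij.1 + ij.2 = s + p - 1,
          (((ij.1 ! : K) * ij.2 !)⁻¹ * (a ^ ij.1 * b ^ ij.2)) • J ^ (n - 1) := by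
          rw [← filter_filter, ← sum_filter_add_sum_filter_not _
            (fun ij => s * ij.1 + ij.2 = s + p - 1), add_eq_left.mpr]
          · refine sum_congr rfl fun ij hij => ?_
            rw [(mem_filter.mp hij).2, show s + p - 1 = n - 1 by omega]
          · refine sum_eq_zero fun ij hij => ?_
            simp only [mem_filter, mem_product, mem_range] at hij
            obtain ⟨⟨⟨hi, hj⟩, hij⟩, hne⟩ := hij
            obtain ⟨i, hi'⟩ : ∃ i, ij.1 = i + 1 := ⟨ij.1 - 1, by omega⟩
            have : i ≤ s * i := Nat.le_mul_of_pos_left i hs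
            rw [hJ _ (by rw [hi', Nat.mul_succ] at hne ⊢; omega), smul_zero]
      _ = carry p s a b • J ^ (n - 1) := by rw [carry, sum_smul]
  all_goals simp (disch := omega) only [add_mul, mul_add, smul_mul_smul_comm, ← pow_add,
    ← pow_succ, ← pow_succ', hJ, smul_zero, add_zero]

lemma exists_expTrunc_mul_expTrunc_eq_of_lt [Fintype K] [CharP K p] (hp : p.Prime) (hpn : p < n)
    (d : K) : ∃ M ∈ aAlg n K, ∃ N ∈ aAlg n K, ∃ L ∈ aAlg n K,
      M ⟨0, by omega⟩ ⟨n - 1, by omega⟩ = 0 ∧ N ⟨0, by omega⟩ ⟨n - 1, by omega⟩ = 0 ∧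
      L ⟨0, by omega⟩ ⟨n - 1, by omega⟩ = d ∧
      expTrunc K p M * expTrunc K p N = expTrunc K p L := by
  have hp2 := hp.two_le
  obtain ⟨a, b, hab⟩ := exists_carry_eq (K := K) hp (s := n - p) (by omega) d
  have hmem : ∀ k, 1 ≤ k → ∀ c : K, c • shiftMatrix n K ^ k ∈ aAlg n K :=
    fun k hk c => SMulMemClass.smul_mem c (shiftMatrix_pow_mem_aAlg hk)
  have hJ : shiftMatrix n K ∈ aAlg n K := by
    simpa using shiftMatrix_pow_mem_aAlg (K := K) (n := n) le_rfl
  refine ⟨_, hmem (n - p) (by omega) a, _, SMulMemClass.smul_mem b hJ, _,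
    add_mem (add_mem (hmem (n - p) (by omega) a) (SMulMemClass.smul_mem b hJ))
      (hmem (n - 1) (by omega) d), ?_, ?_, ?_,
    hab ▸ expTrunc_mul_expTrunc_shiftMatrix hp (by omega) (by omega) a b⟩
  all_goals simp [shiftMatrix_pow_apply, shiftMatrix_apply, show n - p ≠ n - 1 by omega,
    show 1 ≠ n - 1 by omega]

end Witness

/-- The exponential Kirillov function `ψ^Exp_κ` of `A_n(q)`, determined
by `ψ^Exp_κ(Exp X) = θ(X_{1,n})`, is a character of `A_n(q)` if and only if `n ≤ p`
(equivalently, it is a group homomorphism to `ℂ^×` if and only if `n ≤ p`). -/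
theorem statement12 (p : ℕ) (hp : p.Prime) (F : Type) [Field F] [Fintype F] [CharP F p]
    (θ : AddChar F ℂ) (hθ : θ ≠ 1) (n : ℕ) (hn : 1 < n) :
    ∀ f : ↥(grp (aAlg n F)) → ℂ,
      (∀ (X : ↥(aAlg n F)) (g : ↥(grp (aAlg n F))),
        mat g = ∑ i ∈ Finset.range p,
          (Nat.factorial i : F)⁻¹ • ((X : Matrix (Fin n) (Fin n) F) ^ i) →
        f g = θ (kappaDual n hn F X)) →
      ((IsCharacter f ↔ n ≤ p) ∧
       ((∃ φ : ↥(grp (aAlg n F)) →* ℂˣ, ∀ g, f g = φ g) ↔ n ≤ p)) := by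
  intro f hf
  have hfM : ∀ M (hM : M ∈ aAlg n F) (g : grp (aAlg n F)), mat g = expTrunc F p M →
      f g = θ (M ⟨0, by omega⟩ ⟨n - 1, by omega⟩) := fun M hM g hg => hf ⟨M, hM⟩ g hg
  have hf1 : f 1 = 1 := by
    rw [hfM 0 (zero_mem _) 1 (expTrunc_zero hp.pos).symm, Matrix.zero_apply,
      AddChar.map_zero_eq_one]
  have hmul : (∀ g h, f (g * h) = f g * f h) ↔ n ≤ p := by
    refine ⟨fun hmul => ?_, fun hnp g h => ?_⟩
    · by_contra! hpn
      obtain ⟨d, hd⟩ := AddChar.ne_one_iff.mp hθ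
      obtain ⟨M, hM, N, hN, L, hL, hM0, hN0, hLd, hMNL⟩ :=
        exists_expTrunc_mul_expTrunc_eq_of_lt hp hpn d
      obtain ⟨g, hg⟩ := exists_mat_eq_expTrunc hp.pos hM
      obtain ⟨h, hh⟩ := exists_mat_eq_expTrunc hp.pos hN
      have hgh : mat (g * h) = expTrunc F p L := by rw [← hMNL, ← hg, ← hh]; rfl
      apply hd
      rw [← hLd, ← hfM L hL _ hgh, hmul, hfM M hM g hg, hfM N hN h hh, hM0, hN0,
        AddChar.map_zero_eq_one, one_mul]
    · obtain ⟨M, hM, hg⟩ := exists_mat_eq_expTrunc_of_le hp hnp g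
      obtain ⟨N, hN, hh⟩ := exists_mat_eq_expTrunc_of_le hp hnp h
      have hgh : mat (g * h) = expTrunc F p (M + N) := by
        rw [← expTrunc_mul_expTrunc_of_le hp hnp hM hN, ← hg, ← hh]; rfl
      rw [hfM _ (add_mem hM hN) _ hgh, hfM M hM g hg, hfM N hN h hh, Matrix.add_apply,
        AddChar.map_add_eq_mul]
  exact ⟨(isCharacter_iff_map_mul hf1).trans hmul, (exists_monoidHom_units_iff hf1).trans hmul⟩

end Paper
end
end

section
/- Let n be a finite-dimensional nilpotent associative F_q-algebra and λ ∈ n*, with subspaces l^i, s^i defined by the recursion in the context. Then for every i ≥ 0: (a) s^{i+1} is a subalgebra of s^i (closed under multiplication); (b) l^{i+1} is a right ideal of s^i and a two-sided ideal of s^{i+1}; and (c) if s^{d−1} = s^d for some d ≥ 1, then l^{d+i} = l^d and s^{d+i} = s^d for all i ≥ 0. -/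
open scoped BigOperators Classical ComplexOrder
open Complex

set_option linter.unusedSectionVars false

noncomputable section

namespace Paper

variable {F : Type*} [Field F]

/-! ### Algebra groups of matrix algebras -/

variable {n : ℕ}

variable [Fintype F] {S : NonUnitalSubalgebra F (Matrix (Fin n) (Fin n) F)}

/-! Everything follows from associativity, `λ((x y) z) = λ(x (y z))`. By induction every `s^i`
is closed under multiplication; then `l^{i+1}` absorbs `s^i` on the right, `s^{i+1}` maps
`l^{i+1}` into itself on the left, and hence `s^{i+1}` is again closed. For (c), the pair
`(l^{i+1}, s^{i+1})` depends only on `s^i`, so one repetition of `s` freezes both chains. -/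

section ChainStructure

variable {A : Type*} [NonUnitalRing A] [Module F A] [SMulCommClass F A A] [IsScalarTower F A A]
  {lam : A →ₗ[F] F} {s t t' : Submodule F A}

theorem lker_le : lker lam s t ≤ s := fun _ hx => hx.1

theorem lker_anti (h : t ≤ t') : lker lam s t' ≤ lker lam s t :=
  fun _ hx => ⟨hx.1, fun y hy => hx.2 y (h hy)⟩

section MulClosed

variable (hs : ∀ x ∈ s, ∀ y ∈ s, x * y ∈ s)
include hs

theorem mul_mem_lker_self {x y : A} (hx : x ∈ lker lam s s) (hy : y ∈ s) :
    x * y ∈ lker lam s s :=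
  ⟨hs x hx.1 y hy, fun z hz => by rw [mul_assoc]; exact hx.2 _ (hs y hy z hz)⟩

theorem mul_mem_lker_self_of_mem_lker_lker {x y : A} (hy : y ∈ lker lam s (lker lam s s))
    (hx : x ∈ lker lam s s) : y * x ∈ lker lam s s :=
  ⟨hs y hy.1 x hx.1, fun z hz => by
    rw [mul_assoc]; exact hy.2 _ (mul_mem_lker_self hs hx hz)⟩

theorem mul_mem_lker_lker {x y : A} (hx : x ∈ lker lam s (lker lam s s))
    (hy : y ∈ lker lam s (lker lam s s)) : x * y ∈ lker lam s (lker lam s s) :=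
  ⟨hs x hx.1 y hy.1, fun z hz => by
    rw [mul_assoc]; exact hx.2 _ (mul_mem_lker_self_of_mem_lker_lker hs hy hz)⟩

end MulClosed

variable (lam)

theorem lC_succ (i : ℕ) : lC lam (i + 1) = lker lam (sC lam i) (sC lam i) := rfl

theorem mul_mem_sC (i : ℕ) : ∀ x ∈ sC lam i, ∀ y ∈ sC lam i, x * y ∈ sC lam i := by
  induction i with
  | zero => exact fun _ _ _ _ => Submodule.mem_top
  | succ i ih => exact fun x hx y hy => mul_mem_lker_lker ih hx hy

theorem lC_le_sC (i : ℕ) : lC lam i ≤ sC lam i := by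
  cases i with
  | zero => exact bot_le
  | succ i => exact lker_anti lker_le

theorem chain_succ (i : ℕ) :
    chain lam (i + 1) = (lC lam (i + 1), lker lam (sC lam i) (lC lam (i + 1))) := rfl

theorem chain_add_eq_of_sC_eq {k : ℕ} (h : sC lam k = sC lam (k + 1)) (i : ℕ) :
    chain lam (k + 1 + i) = chain lam (k + 1) := by
  induction i with
  | zero => rfl
  | succ i ih =>
    have hs : sC lam (k + 1 + i) = sC lam k := (congrArg Prod.snd ih).trans h.symm
    rw [← add_assoc, chain_succ, lC_succ, hs]
    rfl

end ChainStructure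

theorem statement19_general (F : Type) [Field F] [Fintype F]
    (A : Type) [NonUnitalRing A] [Module F A] [SMulCommClass F A A] [IsScalarTower F A A]
    (lam : A →ₗ[F] F) :
    (∀ i : ℕ, sC lam (i + 1) ≤ sC lam i ∧
      ∀ x y : A, x ∈ sC lam (i + 1) → y ∈ sC lam (i + 1) → x * y ∈ sC lam (i + 1)) ∧
    (∀ i : ℕ, lC lam (i + 1) ≤ sC lam i ∧
      (∀ x ∈ lC lam (i + 1), ∀ y ∈ sC lam i, x * y ∈ lC lam (i + 1)) ∧
      lC lam (i + 1) ≤ sC lam (i + 1) ∧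
      (∀ x ∈ lC lam (i + 1), ∀ y ∈ sC lam (i + 1),
        x * y ∈ lC lam (i + 1) ∧ y * x ∈ lC lam (i + 1))) ∧
    (∀ d : ℕ, 1 ≤ d → sC lam (d - 1) = sC lam d →
      ∀ i : ℕ, lC lam (d + i) = lC lam d ∧ sC lam (d + i) = sC lam d) := by
  refine ⟨fun i => ⟨lker_le, fun x y hx hy => mul_mem_sC lam (i + 1) x hx y hy⟩,
    fun i => ?_, ?_⟩
  · have hs := mul_mem_sC lam i
    exact ⟨lker_le, fun x hx y hy => mul_mem_lker_self hs hx hy, lC_le_sC lam (i + 1),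
      fun x hx y hy => ⟨mul_mem_lker_self hs hx (lker_le hy),
        mul_mem_lker_self_of_mem_lker_lker hs hy hx⟩⟩
  · rintro d hd h i
    obtain ⟨k, rfl⟩ : ∃ k, d = k + 1 := ⟨d - 1, by omega⟩
    have hchain := chain_add_eq_of_sC_eq lam h i
    exact ⟨congrArg Prod.fst hchain, congrArg Prod.snd hchain⟩

/-- For a finite-dimensional nilpotent associative `F_q`-algebra `A` and
`λ ∈ A*`: (a) each `s^{i+1}` is a subalgebra of `s^i`; (b) each `l^{i+1}` is a right ideal
of `s^i` and a two-sided ideal of `s^{i+1}`; (c) if `s^{d-1} = s^d` then the chains are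
constant from `d` onwards. -/
theorem statement19 (p : ℕ) (hp : p.Prime) (F : Type) [Field F] [Fintype F] [CharP F p]
    (A : Type) [NonUnitalRing A] [Module F A] [SMulCommClass F A A] [IsScalarTower F A A]
    [Module.Finite F A] (hnil : IsNilpotentAlgebra A) (lam : A →ₗ[F] F) :
    (∀ i : ℕ, sC lam (i + 1) ≤ sC lam i ∧
      ∀ x y : A, x ∈ sC lam (i + 1) → y ∈ sC lam (i + 1) → x * y ∈ sC lam (i + 1)) ∧
    (∀ i : ℕ, lC lam (i + 1) ≤ sC lam i ∧
      (∀ x ∈ lC lam (i + 1), ∀ y ∈ sC lam i, x * y ∈ lC lam (i + 1)) ∧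
      lC lam (i + 1) ≤ sC lam (i + 1) ∧
      (∀ x ∈ lC lam (i + 1), ∀ y ∈ sC lam (i + 1),
        x * y ∈ lC lam (i + 1) ∧ y * x ∈ lC lam (i + 1))) ∧
    (∀ d : ℕ, 1 ≤ d → sC lam (d - 1) = sC lam d →
      ∀ i : ℕ, lC lam (d + i) = lC lam d ∧ sC lam (d + i) = sC lam d) :=
  statement19_general F A lam

end Paper
end
end
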